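/- arXiv:1803.03040 — 3 statements merged into one kernel-verified Lean document; each statement's English description precedes it below -/
import Mathlib

section
/- Let 1 < p < ∞ and write points of ℝ^d as x = (y,t) ∈ ℝ^{d−1} × ℝ. For any measurable f : ℝ^d → ℂ, the weak Lorentz norm satisfies ‖f‖_{L^{p,∞}(ℝ^d)} ≤ ‖ t ↦ ‖f(·,t)‖_{L^{p,∞}(ℝ^{d−1})} ‖_{L^p(ℝ)}. -/
open MeasureTheory
open scoped ENNReal NNReal

/-- The weak `L^p` (Lorentz `L^{p,∞}`) quasinorm:
`‖f‖_{L^{p,∞}} = sup_{λ > 0} λ · μ{|f| > λ}^{1/p}`. -/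
noncomputable def wLpNorm {α : Type*} [MeasurableSpace α] (μ : Measure α) (p : ℝ)
    (f : α → ℂ) : ℝ≥0∞ :=
  ⨆ l : ℝ≥0, (l : ℝ≥0∞) * μ {x | (l : ℝ) < ‖f x‖} ^ (1 / p)

/-! By Tonelli, the measure of `{|f| > λ}` is the integral over `t` of the measures of its
slices `{y | |f (y, t)| > λ}`, and each slice has measure at most
`‖f(·, t)‖_{L^{p,∞}}^p / λ^p`; integrating in `t` gives exactly the weak-type bound
with constant `‖t ↦ ‖f(·, t)‖_{L^{p,∞}}‖_{L^p}`. -/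

variable {α β : Type*} [MeasurableSpace α] [MeasurableSpace β] {p : ℝ}

lemma measure_lt_norm_le_wLpNorm_rpow_div (μ : Measure α) (f : α → ℂ) (hp : 0 < p)
    {l : ℝ≥0} (hl : l ≠ 0) :
    μ {x | (l : ℝ) < ‖f x‖} ≤ wLpNorm μ p f ^ p / (l : ℝ≥0∞) ^ p := by
  have hle : (l : ℝ≥0∞) * μ {x | (l : ℝ) < ‖f x‖} ^ (1 / p) ≤ wLpNorm μ p f :=
    le_iSup (fun l' : ℝ≥0 => (l' : ℝ≥0∞) * μ {x | (l' : ℝ) < ‖f x‖} ^ (1 / p)) l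
  rw [← ENNReal.div_rpow_of_nonneg _ _ hp.le, ← ENNReal.rpow_inv_le_iff hp, ← one_div,
    ENNReal.le_div_iff_mul_le (.inl (by exact_mod_cast hl)) (.inl ENNReal.coe_ne_top), mul_comm]
  exact hle

lemma wLpNorm_le_of_measure_lt_norm_le (μ : Measure α) (f : α → ℂ) (hp : 0 < p) {C : ℝ≥0∞}
    (hC : ∀ l : ℝ≥0, l ≠ 0 → μ {x | (l : ℝ) < ‖f x‖} ≤ C ^ p / (l : ℝ≥0∞) ^ p) :
    wLpNorm μ p f ≤ C := by
  refine iSup_le fun l => ?_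
  rcases eq_or_ne l 0 with rfl | hl
  · simp
  calc (l : ℝ≥0∞) * μ {x | (l : ℝ) < ‖f x‖} ^ (1 / p)
      ≤ (l : ℝ≥0∞) * (C ^ p / (l : ℝ≥0∞) ^ p) ^ (1 / p) := by gcongr; exact hC l hl
    _ = C := by
      rw [← ENNReal.div_rpow_of_nonneg _ _ hp.le, ← ENNReal.rpow_mul, mul_one_div_cancel hp.ne',
        ENNReal.rpow_one, ENNReal.mul_div_cancel (by exact_mod_cast hl) ENNReal.coe_ne_top]

lemma wLpNorm_prod_le_lintegral_wLpNorm_rpow (μ : Measure α) (ν : Measure β) [SFinite μ]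
    [SFinite ν] (hp : 0 < p) {f : α × β → ℂ} (hf : Measurable f) :
    wLpNorm (μ.prod ν) p f ≤ (∫⁻ t, wLpNorm μ p (fun y => f (y, t)) ^ p ∂ν) ^ (1 / p) := by
  refine wLpNorm_le_of_measure_lt_norm_le _ _ hp fun l hl => ?_
  have hlp : (l : ℝ≥0∞) ^ p ≠ 0 := by simp [hl, hp]
  rw [← ENNReal.rpow_mul, one_div_mul_cancel hp.ne', ENNReal.rpow_one,
    Measure.prod_apply_symm (measurableSet_lt measurable_const hf.norm)]
  calc ∫⁻ t, μ {y | (l : ℝ) < ‖f (y, t)‖} ∂ν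
      ≤ ∫⁻ t, wLpNorm μ p (fun y => f (y, t)) ^ p / (l : ℝ≥0∞) ^ p ∂ν :=
        lintegral_mono fun t => measure_lt_norm_le_wLpNorm_rpow_div μ _ hp hl
    _ = (∫⁻ t, wLpNorm μ p (fun y => f (y, t)) ^ p ∂ν) / (l : ℝ≥0∞) ^ p := by
      simp_rw [div_eq_mul_inv]
      exact lintegral_mul_const' _ _ (ENNReal.inv_ne_top.2 hlp)

/-- For `1 < p < ∞` and `f` on `ℝ^d = ℝ^{d-1} × ℝ`, the weak norm of `f` is dominated by
the mixed norm taking first the weak `L^p` norm in `y` and then the `L^p` norm in `t`. -/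
theorem weak_norm_le_mixed_norm {n : ℕ} (p : ℝ) (hp : 1 < p)
    (f : EuclideanSpace ℝ (Fin n) × ℝ → ℂ) (hf : Measurable f) :
    wLpNorm volume p f ≤
      (∫⁻ t : ℝ, (wLpNorm volume p (fun y => f (y, t))) ^ p) ^ (1 / p) := by
  rw [Measure.volume_eq_prod]
  exact wLpNorm_prod_le_lintegral_wLpNorm_rpow volume volume (zero_lt_one.trans hp) hf
end

section
/- Let 1 < p < ∞ and write points of ℝ^d as x = (y,t) ∈ ℝ^{d−1} × ℝ. For any measurable f : ℝ^d → ℂ, the mixed Lorentz norm satisfies ‖ t ↦ ‖f(·,t)‖_{L^{p,1}(ℝ^{d−1})} ‖_{L^p(ℝ)} ≲ ‖f‖_{L^{p,1}(ℝ^d)}, with implicit constant depending only on p and d. -/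
open MeasureTheory
open scoped ENNReal

/-!
Writing `g λ t = m{y : |f(y,t)| > λ}^{1/p}`, the left-hand side is the `L^p_t` norm of
`∫_0^∞ g λ t dλ`. By Minkowski's integral inequality it is at most `∫_0^∞ ‖g λ ·‖_{L^p_t} dλ`, and
by Tonelli `‖g λ ·‖_{L^p_t}^p = ∫ m{y : |f(y,t)| > λ} dt = m{|f| > λ}`, so this is exactly
`‖f‖_{L^{p,1}}`: the inequality holds with `C = 1`, for arbitrary σ-finite factors.
-/

/-- The Lorentz `L^{p,1}` norm: `‖f‖_{L^{p,1}} = ∫_0^∞ μ{|f| > λ}^{1/p} dλ`. -/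
noncomputable def lorentzNorm1 {α : Type*} [MeasurableSpace α] (μ : Measure α) (p : ℝ)
    (f : α → ℂ) : ℝ≥0∞ :=
  ∫⁻ l in Set.Ioi (0 : ℝ), μ {x | l < ‖f x‖} ^ (1 / p)

open Function ENNReal

lemma ENNReal.rpow_one_div_le_of_le_rpow_mul {p q : ℝ} (hpq : p.HolderConjugate q)
    {A B : ℝ≥0∞} (hA : A ≠ ∞) (h : A ≤ A ^ (1 / q) * B) : A ^ (1 / p) ≤ B := by
  rcases eq_or_ne A 0 with rfl | hA0
  · simp [hpq.pos]
  have hq0 : A ^ (1 / q) ≠ 0 := (rpow_pos (pos_iff_ne_zero.2 hA0) hA).ne'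
  have hqt : A ^ (1 / q) ≠ ∞ := rpow_ne_top_of_nonneg hpq.symm.one_div_nonneg hA
  rw [← ENNReal.mul_le_mul_iff_left hq0 hqt, ← rpow_add _ _ hA0 hA, one_div, one_div,
    hpq.inv_add_inv_eq_one, rpow_one, mul_comm]
  simpa only [one_div] using h

lemma lintegral_rpow_eq_iSup_min {β : Type*} [MeasurableSpace β] {ν : Measure β}
    {p : ℝ} (hp : 0 < p) {F : β → ℝ≥0∞} (hF : Measurable F) :
    ∫⁻ t, F t ^ p ∂ν = ⨆ N : ℕ, ∫⁻ t, min (F t) N ^ p ∂ν := by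
  rw [← lintegral_iSup (fun N => (hF.min measurable_const).pow_const p)
    fun N M hNM t => rpow_le_rpow (min_le_min le_rfl (Nat.mono_cast hNM)) hp.le]
  refine lintegral_congr fun t => ?_
  calc F t ^ p = (⨆ N : ℕ, min (F t) N) ^ p := by
        rw [← inf_iSup_eq, iSup_natCast, inf_top_eq]
    _ = ⨆ N : ℕ, min (F t) N ^ p := (orderIsoRpow p hp).map_iSup _

section Minkowski

variable {α β : Type*} [MeasurableSpace α] [MeasurableSpace β] {μ : Measure α} {ν : Measure β}
  {p : ℝ} {g : α → β → ℝ≥0∞}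

/-- From `h ^ p ≤ h ^ (p - 1) * ∫ g`, Tonelli and Hölder give `∫ h ^ p ≤ (∫ h ^ p) ^ (1 / q) * RHS`;
finiteness of `∫ h ^ p` lets us cancel that factor. -/
lemma lintegral_rpow_le_of_le_lintegral [SFinite μ] [SFinite ν] (hp : 1 < p)
    (hg : Measurable (uncurry g)) {h : β → ℝ≥0∞} (hh : Measurable h)
    (hle : ∀ t, h t ≤ ∫⁻ l, g l t ∂μ) (hfin : ∫⁻ t, h t ^ p ∂ν ≠ ∞) :
    (∫⁻ t, h t ^ p ∂ν) ^ (1 / p) ≤ ∫⁻ l, (∫⁻ t, g l t ^ p ∂ν) ^ (1 / p) ∂μ := by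
  set q := p.conjExponent
  have hpq : p.HolderConjugate q := .conjExponent hp
  set A := ∫⁻ t, h t ^ p ∂ν
  refine rpow_one_div_le_of_le_rpow_mul hpq hfin ?_
  calc A = ∫⁻ t, h t ^ (p - 1) * h t ∂ν := by
        refine lintegral_congr fun t => ?_
        simpa using rpow_add_of_nonneg (x := h t) (p - 1) 1 (by linarith) zero_le_one
    _ ≤ ∫⁻ t, h t ^ (p - 1) * ∫⁻ l, g l t ∂μ ∂ν :=
        lintegral_mono fun t => mul_le_mul_right (hle t) _
    _ = ∫⁻ l, ∫⁻ t, h t ^ (p - 1) * g l t ∂ν ∂μ := by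
        rw [lintegral_lintegral_swap (((hh.comp measurable_snd).pow_const _).mul
          hg).aemeasurable]
        exact lintegral_congr fun t =>
          (lintegral_const_mul _ (hg.comp (measurable_id.prodMk measurable_const))).symm
    _ ≤ ∫⁻ l, A ^ (1 / q) * (∫⁻ t, g l t ^ p ∂ν) ^ (1 / p) ∂μ := by
        refine lintegral_mono fun l => ?_
        have hgl : Measurable (g l) := hg.comp (measurable_const.prodMk measurable_id)
        refine (lintegral_mul_le_Lp_mul_Lq ν hpq.symm (hh.pow_const _).aemeasurable
          hgl.aemeasurable).trans_eq ?_
        simp_rw [← rpow_mul, hpq.sub_one_mul_conj]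
        rfl
    _ = A ^ (1 / q) * ∫⁻ l, (∫⁻ t, g l t ^ p ∂ν) ^ (1 / p) ∂μ :=
        lintegral_const_mul' _ _ (rpow_ne_top_of_nonneg hpq.symm.one_div_nonneg hfin)

/-- **Minkowski's integral inequality**. -/
theorem lintegral_lintegral_rpow_le [SFinite μ] [SigmaFinite ν] (hp : 1 < p)
    (hg : Measurable (uncurry g)) :
    (∫⁻ t, (∫⁻ l, g l t ∂μ) ^ p ∂ν) ^ (1 / p) ≤ ∫⁻ l, (∫⁻ t, g l t ^ p ∂ν) ^ (1 / p) ∂μ := by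
  have hp0 : 0 < p := zero_lt_one.trans hp
  have hF : Measurable fun t => ∫⁻ l, g l t ∂μ := hg.lintegral_prod_left'
  rw [one_div, rpow_inv_le_iff hp0]
  -- on sets of finite measure, bounded truncations of `t ↦ ∫⁻ l, g l t ∂μ` have finite `L^p` norm
  refine lintegral_le_of_forall_fin_meas_le _ fun s _ hνs => ?_
  rw [lintegral_rpow_eq_iSup_min hp0 hF]
  refine iSup_le fun N => ?_
  have hfin : ∫⁻ t in s, min (∫⁻ l, g l t ∂μ) N ^ p ∂ν ≠ ∞ := by
    refine ne_top_of_le_ne_top ?_ (lintegral_mono fun t => rpow_le_rpow (min_le_right _ _) hp0.le)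
    rw [setLIntegral_const]
    exact mul_ne_top (rpow_ne_top_of_nonneg hp0.le (natCast_ne_top N)) hνs
  rw [← rpow_inv_le_iff hp0, ← one_div]
  calc _ ≤ ∫⁻ l, (∫⁻ t in s, g l t ^ p ∂ν) ^ (1 / p) ∂μ :=
        lintegral_rpow_le_of_le_lintegral hp hg (hF.min measurable_const)
          (fun t => min_le_left _ _) hfin
    _ ≤ _ := lintegral_mono fun l =>
        rpow_le_rpow (setLIntegral_le_lintegral _ _) (one_div_nonneg.2 hp0.le)

end Minkowski

section Lorentz

variable {α β : Type*} [MeasurableSpace α] [MeasurableSpace β] {f : α × β → ℂ}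

lemma measurable_measure_slice_superlevel (μ : Measure α) [SFinite μ] (hf : Measurable f) :
    Measurable fun z : ℝ × β => μ {y | z.1 < ‖f (y, z.2)‖} :=
  measurable_measure_prodMk_left (measurableSet_lt measurable_fst.fst
    (hf.comp (measurable_snd.prodMk measurable_fst.snd)).norm)

lemma lintegral_measure_slice_superlevel (μ : Measure α) (ν : Measure β) [SFinite μ] [SFinite ν]
    (hf : Measurable f) (l : ℝ) :
    ∫⁻ t, μ {y | l < ‖f (y, t)‖} ∂ν = μ.prod ν {x | l < ‖f x‖} :=
  (Measure.prod_apply_symm (measurableSet_lt measurable_const hf.norm)).symm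

theorem lorentzNorm1_prod_le (μ : Measure α) (ν : Measure β) [SFinite μ] [SigmaFinite ν]
    {p : ℝ} (hp : 1 < p) (hf : Measurable f) :
    (∫⁻ t, lorentzNorm1 μ p (fun y => f (y, t)) ^ p ∂ν) ^ (1 / p) ≤
      lorentzNorm1 (μ.prod ν) p f := by
  have hp0 : p ≠ 0 := (zero_lt_one.trans hp).ne'
  calc _ ≤ ∫⁻ l in Set.Ioi 0, (∫⁻ t, (μ {y | l < ‖f (y, t)‖} ^ (1 / p)) ^ p ∂ν) ^ (1 / p) :=
        lintegral_lintegral_rpow_le hp ((measurable_measure_slice_superlevel μ hf).pow_const _)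
    _ = lorentzNorm1 (μ.prod ν) p f := by
        simp_rw [← rpow_mul, one_div_mul_cancel hp0, rpow_one,
          lintegral_measure_slice_superlevel μ ν hf]
        rfl

end Lorentz

/-- For `1 < p < ∞` and `f` on `ℝ^d = ℝ^{d-1} × ℝ`, the mixed norm taking first the
`L^{p,1}` norm in `y` and then the `L^p` norm in `t` is dominated by the full
`L^{p,1}` norm, with a constant depending only on `p` and the dimension. -/
theorem mixed_norm_le_lorentz_norm {n : ℕ} (p : ℝ) (hp : 1 < p) :
    ∃ C : ℝ, 0 < C ∧ ∀ f : EuclideanSpace ℝ (Fin n) × ℝ → ℂ, Measurable f →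
      (∫⁻ t : ℝ, (lorentzNorm1 volume p (fun y => f (y, t))) ^ p) ^ (1 / p) ≤
        ENNReal.ofReal C * lorentzNorm1 volume p f := by
  refine ⟨1, one_pos, fun f hf => ?_⟩
  rw [ENNReal.ofReal_one, one_mul, Measure.volume_eq_prod]
  exact lorentzNorm1_prod_le volume volume hp hf
end

section
/- Let Ψ(x,y) = (x/(x²+y²), y/(x²+y²)) on ℝ² \ {0}, and for a smooth function u : ℝ² \ {0} → ℂ² define u*(x,y) = u(Ψ(x,y)). Let D_± = −i(σ₁∂_x ± σ₂∂_y) with Pauli matrices σ₁ = [[0,1],[1,0]], σ₂ = [[0,−i],[i,0]], and let M_±(x,y) = (x²+y²)^{−2} diag((ix ± y)², (ix ∓ y)²). Then D_±(u*) = M_± · (D_∓ u)∘Ψ on ℝ² \ {0}. -/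
open Matrix

/-- The Pauli matrix `σ₁`. -/
def pauli1 : Matrix (Fin 2) (Fin 2) ℂ := !![0, 1; 1, 0]

/-- The Pauli matrix `σ₂`. -/
def pauli2 : Matrix (Fin 2) (Fin 2) ℂ := !![0, -Complex.I; Complex.I, 0]

/-- Partial derivative in `x`. -/
noncomputable def pdx (u : ℝ × ℝ → Fin 2 → ℂ) (p : ℝ × ℝ) : Fin 2 → ℂ :=
  fderiv ℝ u p (1, 0)

/-- Partial derivative in `y`. -/
noncomputable def pdy (u : ℝ × ℝ → Fin 2 → ℂ) (p : ℝ × ℝ) : Fin 2 → ℂ :=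
  fderiv ℝ u p (0, 1)

/-- The operator `D₊ = -i(σ₁∂_x + σ₂∂_y)`. -/
noncomputable def Dplus (u : ℝ × ℝ → Fin 2 → ℂ) (p : ℝ × ℝ) : Fin 2 → ℂ :=
  (-Complex.I) • (pauli1.mulVec (pdx u p) + pauli2.mulVec (pdy u p))

/-- The operator `D₋ = -i(σ₁∂_x - σ₂∂_y)`. -/
noncomputable def Dminus (u : ℝ × ℝ → Fin 2 → ℂ) (p : ℝ × ℝ) : Fin 2 → ℂ :=
  (-Complex.I) • (pauli1.mulVec (pdx u p) - pauli2.mulVec (pdy u p))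

/-- The inversion (Kelvin) map `Ψ(x,y) = (x,y)/(x²+y²)`. -/
noncomputable def inversionMap (p : ℝ × ℝ) : ℝ × ℝ :=
  (p.1 / (p.1 ^ 2 + p.2 ^ 2), p.2 / (p.1 ^ 2 + p.2 ^ 2))

/-- `M₊(x,y) = (x²+y²)⁻² diag((ix+y)², (ix-y)²)`. -/
noncomputable def Mplus (p : ℝ × ℝ) : Matrix (Fin 2) (Fin 2) ℂ :=
  ((((p.1 ^ 2 + p.2 ^ 2) ^ 2)⁻¹ : ℝ) : ℂ) •
    Matrix.diagonal ![(Complex.I * p.1 + p.2) ^ 2, (Complex.I * p.1 - p.2) ^ 2]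

/-- `M₋(x,y) = (x²+y²)⁻² diag((ix-y)², (ix+y)²)`. -/
noncomputable def Mminus (p : ℝ × ℝ) : Matrix (Fin 2) (Fin 2) ℂ :=
  ((((p.1 ^ 2 + p.2 ^ 2) ^ 2)⁻¹ : ℝ) : ℂ) •
    Matrix.diagonal ![(Complex.I * p.1 - p.2) ^ 2, (Complex.I * p.1 + p.2) ^ 2]

lemma clm_pair_apply (U : (ℝ × ℝ) →L[ℝ] (Fin 2 → ℂ)) (a b : ℝ) :
    U (a, b) = a • U (1, 0) + b • U (0, 1) := by
  have h : ((a, b) : ℝ × ℝ) = a • ((1, 0) : ℝ × ℝ) + b • ((0, 1) : ℝ × ℝ) := by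
    simp [Prod.ext_iff]
  rw [h, map_add, _root_.map_smul, _root_.map_smul]

/-- Kelvin transform identity for the Dirac operators:
`D_±(u∘Ψ) = M_± · (D_∓ u)∘Ψ` away from the origin. -/
theorem kelvin_dirac_identity (u : ℝ × ℝ → Fin 2 → ℂ)
    (hu : ContDiffOn ℝ (⊤ : ℕ∞) u {p : ℝ × ℝ | p ≠ 0}) (p : ℝ × ℝ) (hp : p ≠ 0) :
    Dplus (fun q => u (inversionMap q)) p = (Mplus p).mulVec (Dminus u (inversionMap p)) ∧
    Dminus (fun q => u (inversionMap q)) p = (Mminus p).mulVec (Dplus u (inversionMap p)) := by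
  set x := p.1 with hxdef
  set y := p.2 with hydef
  have hr : x ^ 2 + y ^ 2 ≠ 0 := by
    intro h
    apply hp
    have hx : x = 0 := by nlinarith [sq_nonneg x, sq_nonneg y]
    have hy : y = 0 := by nlinarith [sq_nonneg x, sq_nonneg y]
    exact Prod.ext hx hy
  -- derivative of the inversion map
  have hg : HasFDerivAt (fun q : ℝ × ℝ => q.1 ^ 2 + q.2 ^ 2)
      (((2 : ℕ) * p.1 ^ 1) • ContinuousLinearMap.fst ℝ ℝ ℝ +
        ((2 : ℕ) * p.2 ^ 1) • ContinuousLinearMap.snd ℝ ℝ ℝ) p :=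
    ((hasDerivAt_pow 2 p.1).comp_hasFDerivAt p hasFDerivAt_fst).add
      ((hasDerivAt_pow 2 p.2).comp_hasFDerivAt p hasFDerivAt_snd)
  have hinv := (hasDerivAt_inv hr).comp_hasFDerivAt p hg
  have h1 := (hasFDerivAt_fst (p := p)).mul hinv
  have h2 := (hasFDerivAt_snd (p := p)).mul hinv
  have heq : inversionMap = fun q : ℝ × ℝ =>
      (q.1 * (q.1 ^ 2 + q.2 ^ 2)⁻¹, q.2 * (q.1 ^ 2 + q.2 ^ 2)⁻¹) := by
    funext q; simp [inversionMap, div_eq_mul_inv]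
  have hΨ := h1.prodMk h2
  -- differentiability of u at Ψ p
  have hΨp : inversionMap p ≠ 0 := by
    simp only [inversionMap, Ne, Prod.ext_iff, Prod.fst_zero, Prod.snd_zero,
      div_eq_zero_iff]
    rintro ⟨hx | hx, hy | hy⟩
    · exact hp (Prod.ext hx hy)
    · exact hr hy
    · exact hr hx
    · exact hr hx
  have hopen : IsOpen {q : ℝ × ℝ | q ≠ 0} := isOpen_compl_singleton
  have hUd : DifferentiableAt ℝ u (inversionMap p) :=
    (hu.differentiableOn (by simp)).differentiableAt (hopen.mem_nhds hΨp)
  have hU := hUd.hasFDerivAt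
  have hcomp := hU.comp p hΨ
  set U := fderiv ℝ u (inversionMap p) with hUdef
  set Ux := pdx u (inversionMap p) with hUx
  set Uy := pdy u (inversionMap p) with hUy
  set r := x ^ 2 + y ^ 2 with hrdef
  have hux : U (1, 0) = Ux := rfl
  have huy : U (0, 1) = Uy := rfl
  have hpe : inversionMap p = (p.1 * (p.1 ^ 2 + p.2 ^ 2)⁻¹, p.2 * (p.1 ^ 2 + p.2 ^ 2)⁻¹) := by
    rw [heq]
  have hcomp' : HasFDerivAt (fun q => u (inversionMap q))
      (U.comp ((x • ((-(r ^ 2)⁻¹) • ((2 * x) • ContinuousLinearMap.fst ℝ ℝ ℝ +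
          (2 * y) • ContinuousLinearMap.snd ℝ ℝ ℝ)) + r⁻¹ • ContinuousLinearMap.fst ℝ ℝ ℝ).prod
        (y • ((-(r ^ 2)⁻¹) • ((2 * x) • ContinuousLinearMap.fst ℝ ℝ ℝ +
          (2 * y) • ContinuousLinearMap.snd ℝ ℝ ℝ)) + r⁻¹ • ContinuousLinearMap.snd ℝ ℝ ℝ))) p := by
    rw [heq]
    have hU' : HasFDerivAt u U (p.1 * (p.1 ^ 2 + p.2 ^ 2)⁻¹, p.2 * (p.1 ^ 2 + p.2 ^ 2)⁻¹) :=
      hpe ▸ hU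
    have hc := hU'.comp p (h1.prodMk h2)
    convert hc using 2 <;> norm_num <;> rfl
  have key1 : pdx (fun q => u (inversionMap q)) p
      = ((y ^ 2 - x ^ 2) / r ^ 2) • Ux + (-(2 * x * y) / r ^ 2) • Uy := by
    rw [pdx, hcomp'.fderiv]
    simp only [ContinuousLinearMap.comp_apply, ContinuousLinearMap.prod_apply,
      ContinuousLinearMap.add_apply, ContinuousLinearMap.smul_apply,
      ContinuousLinearMap.coe_fst', ContinuousLinearMap.coe_snd', smul_eq_mul]
    rw [clm_pair_apply, hux, huy]
    have hr' : x ^ 2 + y ^ 2 ≠ 0 := hrdef ▸ hr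
    have e1 : x * (-(r ^ 2)⁻¹ * (2 * x * 1 + 2 * y * 0)) + r⁻¹ * 1
        = (y ^ 2 - x ^ 2) / r ^ 2 := by
      rw [hrdef]; field_simp; ring
    have e2 : y * (-(r ^ 2)⁻¹ * (2 * x * 1 + 2 * y * 0)) + r⁻¹ * 0
        = -(2 * x * y) / r ^ 2 := by
      rw [hrdef]; field_simp; ring
    rw [e1, e2]
  have key2 : pdy (fun q => u (inversionMap q)) p
      = (-(2 * x * y) / r ^ 2) • Ux + ((x ^ 2 - y ^ 2) / r ^ 2) • Uy := by
    rw [pdy, hcomp'.fderiv]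
    simp only [ContinuousLinearMap.comp_apply, ContinuousLinearMap.prod_apply,
      ContinuousLinearMap.add_apply, ContinuousLinearMap.smul_apply,
      ContinuousLinearMap.coe_fst', ContinuousLinearMap.coe_snd', smul_eq_mul]
    rw [clm_pair_apply, hux, huy]
    have hr' : x ^ 2 + y ^ 2 ≠ 0 := hrdef ▸ hr
    have e1 : x * (-(r ^ 2)⁻¹ * (2 * x * 0 + 2 * y * 1)) + r⁻¹ * 0
        = -(2 * x * y) / r ^ 2 := by
      rw [hrdef]; field_simp; ring
    have e2 : y * (-(r ^ 2)⁻¹ * (2 * x * 0 + 2 * y * 1)) + r⁻¹ * 1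
        = (x ^ 2 - y ^ 2) / r ^ 2 := by
      rw [hrdef]; field_simp; ring
    rw [e1, e2]
  have hr' : p.1 ^ 2 + p.2 ^ 2 ≠ 0 := by rw [← hxdef, ← hydef, ← hrdef]; exact hr
  constructor
  · funext i
    fin_cases i
    · simp only [Dplus, Dminus, Mplus, Mminus, key1, key2, pauli1, pauli2,
        Matrix.mulVec, dotProduct, Fin.sum_univ_two, Matrix.smul_apply,
        Matrix.diagonal_apply, Matrix.cons_val_zero, Matrix.cons_val_one, Matrix.head_cons,
        Matrix.of_apply, Pi.smul_apply, Pi.add_apply, Pi.sub_apply, smul_eq_mul,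
        Complex.real_smul, ← hUx, ← hUy, Fin.mk_zero, Fin.mk_one, Fin.isValue,
        Matrix.cons_val', Matrix.empty_val', Matrix.cons_val_fin_one,
        if_true, reduceIte, hrdef, hxdef, hydef, one_ne_zero, if_false,
        Matrix.vecHead, Matrix.vecTail]
      push_cast
      linear_combination (Complex.I * ((p.1 : ℂ) ^ 2 * (Ux 1 + Complex.I * Uy 1)
        + 2 * p.1 * p.2 * Uy 1) / ((p.1 : ℂ) ^ 2 + (p.2 : ℂ) ^ 2) ^ 2) * Complex.I_sq
    · simp only [Dplus, Dminus, Mplus, Mminus, key1, key2, pauli1, pauli2,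
        Matrix.mulVec, dotProduct, Fin.sum_univ_two, Matrix.smul_apply,
        Matrix.diagonal_apply, Matrix.cons_val_zero, Matrix.cons_val_one, Matrix.head_cons,
        Matrix.of_apply, Pi.smul_apply, Pi.add_apply, Pi.sub_apply, smul_eq_mul,
        Complex.real_smul, ← hUx, ← hUy, Fin.mk_zero, Fin.mk_one, Fin.isValue,
        Matrix.cons_val', Matrix.empty_val', Matrix.cons_val_fin_one,
        if_true, reduceIte, hrdef, hxdef, hydef, one_ne_zero, if_false,
        Matrix.vecHead, Matrix.vecTail]
      push_cast
      linear_combination (Complex.I * ((p.1 : ℂ) ^ 2 * (Ux 0 - Complex.I * Uy 0)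
        + 2 * p.1 * p.2 * Uy 0) / ((p.1 : ℂ) ^ 2 + (p.2 : ℂ) ^ 2) ^ 2) * Complex.I_sq
  · funext i
    fin_cases i
    · simp only [Dplus, Dminus, Mplus, Mminus, key1, key2, pauli1, pauli2,
        Matrix.mulVec, dotProduct, Fin.sum_univ_two, Matrix.smul_apply,
        Matrix.diagonal_apply, Matrix.cons_val_zero, Matrix.cons_val_one, Matrix.head_cons,
        Matrix.of_apply, Pi.smul_apply, Pi.add_apply, Pi.sub_apply, smul_eq_mul,
        Complex.real_smul, ← hUx, ← hUy, Fin.mk_zero, Fin.mk_one, Fin.isValue,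
        Matrix.cons_val', Matrix.empty_val', Matrix.cons_val_fin_one,
        if_true, reduceIte, hrdef, hxdef, hydef, one_ne_zero, if_false,
        Matrix.vecHead, Matrix.vecTail]
      push_cast
      linear_combination (Complex.I * ((p.1 : ℂ) ^ 2 * (Ux 1 - Complex.I * Uy 1)
        + 2 * p.1 * p.2 * Uy 1) / ((p.1 : ℂ) ^ 2 + (p.2 : ℂ) ^ 2) ^ 2) * Complex.I_sq
    · simp only [Dplus, Dminus, Mplus, Mminus, key1, key2, pauli1, pauli2,
        Matrix.mulVec, dotProduct, Fin.sum_univ_two, Matrix.smul_apply,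
        Matrix.diagonal_apply, Matrix.cons_val_zero, Matrix.cons_val_one, Matrix.head_cons,
        Matrix.of_apply, Pi.smul_apply, Pi.add_apply, Pi.sub_apply, smul_eq_mul,
        Complex.real_smul, ← hUx, ← hUy, Fin.mk_zero, Fin.mk_one, Fin.isValue,
        Matrix.cons_val', Matrix.empty_val', Matrix.cons_val_fin_one,
        if_true, reduceIte, hrdef, hxdef, hydef, one_ne_zero, if_false,
        Matrix.vecHead, Matrix.vecTail]
      push_cast
      linear_combination (Complex.I * ((p.1 : ℂ) ^ 2 * (Ux 0 + Complex.I * Uy 0)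
        + 2 * p.1 * p.2 * Uy 0) / ((p.1 : ℂ) ^ 2 + (p.2 : ℂ) ^ 2) ^ 2) * Complex.I_sq
end
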